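/- arXiv:1911.05951 — 2 statements merged into one kernel-verified Lean document; each statement's English description precedes it below -/
import Mathlib

section
/- Let G be a directed cactus graph and (i,j) a directed edge of G. Then there is exactly one spanning forest of G consisting of two trees, one rooted at i containing all vertices reachable from i without passing through j, and one rooted at j containing all remaining vertices; equivalently, for each vertex k reachable from i without passing through j, the number of 2-tree spanning forests with roots j and i in which k lies in the tree of i equals 1. -/
open Matrix Finset

/-- Out-degree of vertex `i` in the digraph with adjacency `A`. -/
def outdeg {n : ℕ} (A : Fin n → Fin n → Bool) (i : Fin n) : ℕ :=
  (Finset.univ.filter (fun j => A i j = true)).card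

/-- In-degree of vertex `i`. -/
def indeg {n : ℕ} (A : Fin n → Fin n → Bool) (i : Fin n) : ℕ :=
  (Finset.univ.filter (fun j => A j i = true)).card

/-- Laplacian matrix of a digraph: diagonal = out-degree, `-1` on edges, `0` otherwise. -/
def lap {n : ℕ} (A : Fin n → Fin n → Bool) : Matrix (Fin n) (Fin n) ℝ :=
  Matrix.of fun i j => if i = j then (outdeg A i : ℝ) else if A i j then -1 else 0

/-- Reachability by directed edges. -/
def Reach {n : ℕ} (A : Fin n → Fin n → Bool) : Fin n → Fin n → Prop :=
  Relation.ReflTransGen (fun a b => A a b = true)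

def StronglyConnected {n : ℕ} (A : Fin n → Fin n → Bool) : Prop := ∀ i j, Reach A i j

def IsBalanced {n : ℕ} (A : Fin n → Fin n → Bool) : Prop := ∀ i, indeg A i = outdeg A i

/-- In-degree of `v` in an edge set `T`. -/
def tIndeg {n : ℕ} (T : Finset (Fin n × Fin n)) (v : Fin n) : ℕ :=
  (T.filter (fun e => e.2 = v)).card

/-- Reachability using only the edges of `T`. -/
def ReachIn {n : ℕ} (T : Finset (Fin n × Fin n)) : Fin n → Fin n → Prop :=
  Relation.ReflTransGen (fun a b => (a, b) ∈ T)

/-- Spanning tree of the digraph rooted at `i` (spanning arborescence, edges directed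
away from `i`): every vertex other than `i` has in-degree 1, `i` has in-degree 0, and
every vertex is reachable from `i` (i.e. the subgraph is connected and acyclic). -/
def IsSpanningTree {n : ℕ} (A : Fin n → Fin n → Bool) (i : Fin n)
    (T : Finset (Fin n × Fin n)) : Prop :=
  (∀ e ∈ T, A e.1 e.2 = true) ∧ tIndeg T i = 0 ∧
    (∀ v, v ≠ i → tIndeg T v = 1) ∧ (∀ v, ReachIn T i v)

/-- Spanning forest with exactly two trees, rooted at `i` and `j`: two vertex-disjoint
arborescences partitioning the vertex set, with roots `i` and `j`. -/
def IsTwoForest {n : ℕ} (A : Fin n → Fin n → Bool) (i j : Fin n)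
    (T : Finset (Fin n × Fin n)) : Prop :=
  (∀ e ∈ T, A e.1 e.2 = true) ∧ tIndeg T i = 0 ∧ tIndeg T j = 0 ∧
    (∀ v, v ≠ i → v ≠ j → tIndeg T v = 1) ∧ (∀ v, ReachIn T i v ∨ ReachIn T j v)

/-- `det L[{i}ᶜ, {i}ᶜ]`: determinant of the principal submatrix deleting row/column `i`. -/
def minor1 {n : ℕ} (L : Matrix (Fin n) (Fin n) ℝ) (i : Fin n) : ℝ :=
  (L.submatrix (fun a : {x : Fin n // x ≠ i} => (a : Fin n))
    (fun a : {x : Fin n // x ≠ i} => (a : Fin n))).det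

/-- `det L[{i,j}ᶜ, {i,j}ᶜ]`: determinant of the principal submatrix deleting rows and
columns `i` and `j`. -/
def minor2 {n : ℕ} (L : Matrix (Fin n) (Fin n) ℝ) (i j : Fin n) : ℝ :=
  (L.submatrix (fun a : {x : Fin n // x ≠ i ∧ x ≠ j} => (a : Fin n))
    (fun a : {x : Fin n // x ≠ i ∧ x ≠ j} => (a : Fin n))).det

/-- `M` is the Moore–Penrose inverse of `L` (the four Penrose equations). -/
def IsMoorePenrose {n : ℕ} (L M : Matrix (Fin n) (Fin n) ℝ) : Prop :=
  L * M * L = L ∧ M * L * M = M ∧ (L * M)ᵀ = L * M ∧ (M * L)ᵀ = M * L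

/-- Resistance `r_{ij} = l†_{ii} + l†_{jj} - 2 l†_{ij}` computed from `M = L†`. -/
def resist {n : ℕ} (M : Matrix (Fin n) (Fin n) ℝ) (i j : Fin n) : ℝ :=
  M i i + M j j - 2 * M i j

/-- Directed path from `i` to `j`: a list of distinct vertices starting at `i`, ending at
`j`, consecutive ones joined by directed edges. -/
def IsPath {n : ℕ} (A : Fin n → Fin n → Bool) (i j : Fin n) (p : List (Fin n)) : Prop :=
  p.Chain' (fun a b => A a b = true) ∧ p.head? = some i ∧ p.getLast? = some j ∧ p.Nodup

/-- `s` is the edge set of a directed cycle of the digraph: the cyclically consecutive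
pairs of a nonempty duplicate-free vertex list, all being directed edges. -/
def IsCycle {n : ℕ} (A : Fin n → Fin n → Bool) (s : Finset (Fin n × Fin n)) : Prop :=
  ∃ c : List (Fin n), 2 ≤ c.length ∧ c.Nodup ∧
    (∀ p ∈ c.zip (c.rotate 1), A p.1 p.2 = true) ∧ s = (c.zip (c.rotate 1)).toFinset

/-- Vertex set of a cycle given by its edge set. -/
def cycVerts {n : ℕ} (s : Finset (Fin n × Fin n)) : Finset (Fin n) := s.image Prod.fst

/-- Directed cactus: strongly connected and every directed edge lies in exactly one
directed cycle. -/
def IsCactus {n : ℕ} (A : Fin n → Fin n → Bool) : Prop :=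
  StronglyConnected A ∧
    ∀ i j : Fin n, A i j = true → ∃! s : Finset (Fin n × Fin n), IsCycle A s ∧ (i, j) ∈ s

/-- Classical distance: length (number of edges) of a shortest directed path. -/
noncomputable def pdist {n : ℕ} (A : Fin n → Fin n → Bool) (i j : Fin n) : ℕ :=
  sInf {m : ℕ | ∃ p : List (Fin n), IsPath A i j p ∧ p.length = m + 1}

/-!
Call an edge `(u, v)` an *entry edge* of `v` if some walk from `i` reaches `u` without visiting
`v`. In a cactus every `v ≠ i` has exactly one entry edge: fix the first edge `(v, w)` of a path
from `v` back to `i`; for any entry edge `(u, v)` the walk `w ⇝ i ⇝ u` avoids `v`, so `v`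
followed by a duplicate-free such path is a cycle through both `(v, w)` and `(u, v)`. Since
`(v, w)` lies on only one cycle, which enters `v` only once, all entry edges of `v` coincide.

The entry edges of all `v ∉ {i, j}` form a two-forest rooted at `j` and `i`: cutting a walk
from `i` at its first visit to `v` exhibits the entry edge of `v`, so induction on the set of
allowed vertices shows that everything reachable from `i` while avoiding `j` lies in the tree
of `i`. Conversely, in any two-forest `T` rooted at `j`, `i`, the tree path to the parent `u` of
`v` (preceded by the edge `(i, j)` if it starts at `j`) cannot visit `v`, because its first visit
would come from the unique parent `u`; so every edge of `T` is an entry edge and `T` is that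
forest.
-/

open Relation

section RestrictedReachability

variable {α : Type*} {R R' : α → α → Prop} {S S' : Finset α} {a b c : α}

/-- Only the targets of the steps must lie in `S`, not the start `a`. -/
def ReachWithin (R : α → α → Prop) (S : Finset α) : α → α → Prop :=
  ReflTransGen fun x y => R x y ∧ y ∈ S

namespace ReachWithin

theorem mono (hR : ∀ x y, R x y → R' x y) (hS : S ⊆ S') (h : ReachWithin R S a b) :
    ReachWithin R' S' a b :=
  ReflTransGen.mono (fun x y hxy => ⟨hR x y hxy.1, hS hxy.2⟩) a b h

theorem of_reflTransGen [Fintype α] (h : ReflTransGen R a b) : ReachWithin R univ a b :=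
  ReflTransGen.mono (fun _ _ hxy => ⟨hxy, mem_univ _⟩) a b h

theorem trans (hab : ReachWithin R S a b) (hbc : ReachWithin R S b c) : ReachWithin R S a c :=
  ReflTransGen.trans hab hbc

theorem tail (h : ReachWithin R S a b) (hbc : R b c) (hc : c ∈ S) : ReachWithin R S a c :=
  ReflTransGen.tail h ⟨hbc, hc⟩

theorem head (hab : R a b) (hb : b ∈ S) (h : ReachWithin R S b c) : ReachWithin R S a c :=
  ReflTransGen.head ⟨hab, hb⟩ h

theorem or_exists_first_visit [DecidableEq α] (h : ReachWithin R S a c) (b : α) :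
    ReachWithin R (S.erase b) a c ∨
      ∃ u, ReachWithin R (S.erase b) a u ∧ R u b ∧ b ∈ S := by
  induction h with
  | refl => exact Or.inl ReflTransGen.refl
  | @tail d c _ hdc ih =>
    rcases ih with h | h
    · by_cases hcb : c = b
      · subst hcb
        exact Or.inr ⟨d, h, hdc⟩
      · exact Or.inl (h.tail hdc.1 (mem_erase.2 ⟨hcb, hdc.2⟩))
    · exact Or.inr h

theorem exists_first_visit [DecidableEq α] (h : ReachWithin R S a b) (hab : a ≠ b) :
    ∃ u, ReachWithin R (S.erase b) a u ∧ R u b ∧ b ∈ S := by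
  refine (h.or_exists_first_visit b).resolve_left fun h' => ?_
  obtain rfl | ⟨d, -, -, hb⟩ := ReflTransGen.cases_tail h'
  · exact hab rfl
  · simp at hb

theorem exists_nodup_isChain [DecidableEq α] (h : ReachWithin R S a b) :
    ∃ l, (a :: l).IsChain R ∧ (a :: l).getLast (List.cons_ne_nil a l) = b ∧
      (a :: l).Nodup ∧ ∀ x ∈ l, x ∈ S := by
  induction S using strongInduction generalizing b with
  | H S ih =>
    by_cases hab : a = b
    · exact ⟨[], .singleton a, hab, List.nodup_singleton a, by simp⟩
    obtain ⟨u, hu, hub, hbS⟩ := h.exists_first_visit hab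
    obtain ⟨l, hc, hlast, hnd, hlS⟩ := ih _ (erase_ssubset hbS) hu
    have hbl : b ∉ a :: l := by
      rintro (_ | ⟨_, hb⟩)
      · exact hab rfl
      · simpa using hlS b hb
    refine ⟨l ++ [b], ?_, by simp, ?_, ?_⟩
    · rw [← List.cons_append]
      exact hc.append (.singleton b) (by simp_all [List.getLast?_eq_some_getLast])
    · rw [← List.cons_append]
      exact hnd.append (List.nodup_singleton b) (List.disjoint_singleton.2 hbl)
    · simpa [or_imp, forall_and, hbS] using fun x hx => mem_of_mem_erase (hlS x hx)

end ReachWithin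

theorem exists_last_exit [DecidableEq α] [Fintype α] (h : ReflTransGen R a c) (hac : a ≠ c) :
    ∃ w, R a w ∧ w ≠ a ∧ ReachWithin R (univ.erase a) w c := by
  induction h with
  | refl => exact absurd rfl hac
  | @tail d c hd hdc ih =>
    by_cases hda : a = d
    · subst hda
      exact ⟨c, hdc, hac.symm, ReflTransGen.refl⟩
    · obtain ⟨w, haw, hwa, hw⟩ := ih hda
      exact ⟨w, haw, hwa, hw.tail hdc (by simpa using hac.symm)⟩

end RestrictedReachability

section CyclicPairs

variable {α : Type*}

theorem forall_mem_zip_rotate_one_iff_isChain {R : α → α → Prop} {a : α} {l : List α} :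
    (∀ p ∈ (a :: l).zip ((a :: l).rotate 1), R p.1 p.2) ↔ (a :: l ++ [a]).IsChain R := by
  rw [List.isChain_cons_append_singleton_iff_forall₂, List.forall₂_iff_zip]
  simp [List.rotate_cons_succ]

theorem List.Nodup.fst_eq_of_mem_zip_rotate_one {c : List α} (hc : c.Nodup) {x y v : α}
    (hx : (x, v) ∈ c.zip (c.rotate 1)) (hy : (y, v) ∈ c.zip (c.rotate 1)) : x = y := by
  obtain ⟨k, hk, hxk⟩ := List.mem_iff_getElem.1 hx
  obtain ⟨m, hm, hym⟩ := List.mem_iff_getElem.1 hy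
  simp only [List.getElem_zip, Prod.mk.injEq] at hxk hym
  have hkm : k = m :=
    (List.Nodup.getElem_inj_iff (List.nodup_rotate.2 hc)).1 (hxk.2.trans hym.2.symm)
  subst hkm
  exact hxk.1.symm.trans hym.1

end CyclicPairs

section Cactus

variable {n : ℕ} {A : Fin n → Fin n → Bool}

theorem exists_isCycle_of_reachWithin {u v w : Fin n} (hvw : A v w = true) (hwv : w ≠ v)
    (huv : A u v = true) (h : ReachWithin (fun x y => A x y = true) (univ.erase v) w u) :
    ∃ s, IsCycle A s ∧ (v, w) ∈ s ∧ (u, v) ∈ s := by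
  obtain ⟨l, hchain, hlast, hnd, hlv⟩ := h.exists_nodup_isChain
  have hv : v ∉ w :: l := by
    rintro (_ | ⟨_, hv⟩)
    · exact hwv rfl
    · simpa using hlv v hv
  obtain ⟨q, hq⟩ : ∃ q, w :: l = q ++ [u] :=
    ⟨_, hlast ▸ (List.dropLast_append_getLast (List.cons_ne_nil w l)).symm⟩
  refine ⟨((v :: w :: l).zip ((v :: w :: l).rotate 1)).toFinset,
    ⟨v :: w :: l, by simp, List.nodup_cons.2 ⟨hv, hnd⟩, ?_, rfl⟩, ?_, ?_⟩
  · refine forall_mem_zip_rotate_one_iff_isChain (R := fun x y => A x y = true) |>.2 ?_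
    refine .cons_cons hvw (hchain.append (.singleton v) ?_)
    simp_all [List.getLast?_eq_some_getLast]
  · simp [List.rotate_cons_succ]
  · rw [List.mem_toFinset, hq, List.rotate_cons_succ, List.rotate_zero, ← List.cons_append,
      List.zip_append (by simp)]
    simp

theorem IsCycle.fst_eq_of_mem {s : Finset (Fin n × Fin n)} (hs : IsCycle A s) {x y v : Fin n}
    (hx : (x, v) ∈ s) (hy : (y, v) ∈ s) : x = y := by
  obtain ⟨c, -, hnd, -, rfl⟩ := hs
  exact hnd.fst_eq_of_mem_zip_rotate_one (List.mem_toFinset.1 hx) (List.mem_toFinset.1 hy)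

def IsEntry (A : Fin n → Fin n → Bool) (i u v : Fin n) : Prop :=
  A u v = true ∧ ReachWithin (fun x y => A x y = true) (univ.erase v) i u

theorem exists_isEntry (hA : StronglyConnected A) {i v : Fin n} (hvi : v ≠ i) :
    ∃ u, IsEntry A i u v := by
  obtain ⟨u, hu, huv, -⟩ := (ReachWithin.of_reflTransGen (hA i v)).exists_first_visit hvi.symm
  exact ⟨u, huv, hu⟩

theorem IsEntry.unique (hcact : IsCactus A) {i u₁ u₂ v : Fin n} (hvi : v ≠ i)
    (h₁ : IsEntry A i u₁ v) (h₂ : IsEntry A i u₂ v) : u₁ = u₂ := by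
  obtain ⟨w, hvw, hwv, hwi⟩ := exists_last_exit (hcact.1 v i) hvi
  obtain ⟨s, ⟨hs, -⟩, hs_unique⟩ := hcact.2 v w hvw
  have hmem : ∀ u, IsEntry A i u v → (u, v) ∈ s := fun u hu => by
    obtain ⟨s', hs', hvw', huv'⟩ := exists_isCycle_of_reachWithin hvw hwv hu.1 (hwi.trans hu.2)
    exact hs_unique s' ⟨hs', hvw'⟩ ▸ huv'
  exact hs.fst_eq_of_mem (hmem u₁ h₁) (hmem u₂ h₂)

open Classical in
noncomputable def entryForest (A : Fin n → Fin n → Bool) (i j : Fin n) :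
    Finset (Fin n × Fin n) :=
  univ.filter fun e => e.2 ≠ i ∧ e.2 ≠ j ∧ IsEntry A i e.1 e.2

theorem mem_entryForest {i j u v : Fin n} :
    (u, v) ∈ entryForest A i j ↔ v ≠ i ∧ v ≠ j ∧ IsEntry A i u v := by
  classical
  simp [entryForest]

theorem tIndeg_eq_zero_iff {T : Finset (Fin n × Fin n)} {v : Fin n} :
    tIndeg T v = 0 ↔ ∀ u, (u, v) ∉ T := by
  simp only [tIndeg, card_eq_zero, filter_eq_empty_iff, Prod.forall]
  exact ⟨fun h u hu => h u v hu rfl, fun h a b hab hb => h a (hb ▸ hab)⟩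

theorem tIndeg_eq_one_iff {T : Finset (Fin n × Fin n)} {v : Fin n} :
    tIndeg T v = 1 ↔ ∃! u, (u, v) ∈ T := by
  rw [tIndeg, card_eq_one]
  constructor
  · rintro ⟨⟨u, v'⟩, he⟩
    obtain ⟨hu, rfl⟩ := mem_filter.1 (he ▸ mem_singleton_self (u, v'))
    refine ⟨u, hu, fun y hy => ?_⟩
    have hy' : (y, v') ∈ T.filter (·.2 = v') := mem_filter.2 ⟨hy, rfl⟩
    simpa [he] using hy'
  · rintro ⟨u, hu, huniq⟩
    refine ⟨(u, v), ext fun ⟨a, b⟩ => ?_⟩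
    simp only [mem_filter, mem_singleton, Prod.mk.injEq]
    constructor
    · rintro ⟨hab, rfl⟩
      exact ⟨huniq a hab, rfl⟩
    · rintro ⟨rfl, rfl⟩
      exact ⟨hu, rfl⟩

theorem tIndeg_entryForest_of_ne (hcact : IsCactus A) {i j v : Fin n} (hvi : v ≠ i)
    (hvj : v ≠ j) : tIndeg (entryForest A i j) v = 1 := by
  obtain ⟨u, hu⟩ := exists_isEntry hcact.1 hvi
  exact tIndeg_eq_one_iff.2 ⟨u, mem_entryForest.2 ⟨hvi, hvj, hu⟩,
    fun u' hu' => (mem_entryForest.1 hu').2.2.unique hcact hvi hu⟩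

theorem reachIn_entryForest (i j : Fin n) (S : Finset (Fin n)) {v : Fin n}
    (h : ReachWithin (fun x y => A x y = true) S i v) :
    ReachIn (entryForest A i j) i v ∨ (j ∈ S ∧ ReachIn (entryForest A i j) j v) := by
  induction S using strongInduction generalizing v with
  | H S ih =>
    by_cases hvi : i = v
    · exact Or.inl (hvi ▸ ReflTransGen.refl)
    obtain ⟨u, hu, huv, hvS⟩ := h.exists_first_visit hvi
    by_cases hvj : v = j
    · exact Or.inr ⟨hvj ▸ hvS, hvj ▸ ReflTransGen.refl⟩
    have huv_mem : (u, v) ∈ entryForest A i j := mem_entryForest.2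
      ⟨Ne.symm hvi, hvj, huv, hu.mono (fun _ _ => id) (erase_subset_erase v (subset_univ S))⟩
    rcases ih _ (erase_ssubset hvS) hu with hiu | ⟨hjS, hju⟩
    · exact Or.inl (ReflTransGen.tail hiu huv_mem)
    · exact Or.inr ⟨mem_of_mem_erase hjS, ReflTransGen.tail hju huv_mem⟩

theorem isTwoForest_entryForest (hcact : IsCactus A) (i j : Fin n) :
    IsTwoForest A j i (entryForest A i j) := by
  refine ⟨fun e he => (mem_entryForest.1 he).2.2.1, ?_, ?_, ?_, ?_⟩
  · exact tIndeg_eq_zero_iff.2 fun u hu => (mem_entryForest.1 hu).2.1 rfl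
  · exact tIndeg_eq_zero_iff.2 fun u hu => (mem_entryForest.1 hu).1 rfl
  · exact fun v hvj hvi => tIndeg_entryForest_of_ne hcact hvi hvj
  · intro v
    rcases reachIn_entryForest i j univ (ReachWithin.of_reflTransGen (hcact.1 i v)) with h | h
    exacts [Or.inr h, Or.inl h.2]

theorem IsTwoForest.subset_entryForest {i j : Fin n} (hedge : A i j = true)
    {T : Finset (Fin n × Fin n)} (hT : IsTwoForest A j i T) : T ⊆ entryForest A i j := by
  obtain ⟨hTA, hj0, hi0, hT1, hreach⟩ := hT
  rintro ⟨u, v⟩ huv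
  have hvj : v ≠ j := by rintro rfl; exact tIndeg_eq_zero_iff.1 hj0 u huv
  have hvi : v ≠ i := by rintro rfl; exact tIndeg_eq_zero_iff.1 hi0 u huv
  obtain ⟨_, -, hparent⟩ := tIndeg_eq_one_iff.1 (hT1 v hvj hvi)
  have havoid : ∀ r, r ≠ v → ReachIn T r u →
      ReachWithin (fun x y => A x y = true) (univ.erase v) r u := fun r hrv hr => by
    have hr' := ReachWithin.of_reflTransGen hr
    have hTr : ReachWithin (fun x y => (x, y) ∈ T) (univ.erase v) r u := by
      rcases hr'.or_exists_first_visit v with h | ⟨w, hw, hwv, -⟩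
      · exact h
      · exact (hparent w hwv).trans (hparent u huv).symm ▸ hw
    exact hTr.mono (fun x y hxy => hTA (x, y) hxy) le_rfl
  refine mem_entryForest.2 ⟨hvi, hvj, hTA _ huv, ?_⟩
  rcases hreach u with h | h
  · exact ReachWithin.head (R := fun x y => A x y = true) hedge (by simpa using hvj.symm)
      (havoid j hvj.symm h)
  · exact havoid i hvi.symm h

theorem IsTwoForest.eq_entryForest (hcact : IsCactus A) {i j : Fin n} (hedge : A i j = true)
    {T : Finset (Fin n × Fin n)} (hT : IsTwoForest A j i T) : T = entryForest A i j := by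
  refine (hT.subset_entryForest hedge).antisymm fun ⟨u, v⟩ huv => ?_
  obtain ⟨hvi, hvj, hu⟩ := mem_entryForest.1 huv
  obtain ⟨w, hw, -⟩ := tIndeg_eq_one_iff.1 (hT.2.2.2.1 v hvj hvi)
  have hwu : w = u :=
    (mem_entryForest.1 (hT.subset_entryForest hedge hw)).2.2.unique hcact hvi hu
  exact hwu ▸ hw

theorem IsPath.reachWithin {i k : Fin n} {p : List (Fin n)} {S : Finset (Fin n)}
    (hp : IsPath A i k p) (hpS : ∀ x ∈ p, x ∈ S) :
    ReachWithin (fun x y => A x y = true) S i k := by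
  obtain ⟨hchain, hhead, hlast, -⟩ := hp
  have hne : p ≠ [] := by rintro rfl; simp at hhead
  have h := List.relationReflTransGen_of_exists_isChain p
    (List.IsChain.imp_of_mem_imp (S := fun x y => A x y = true ∧ y ∈ S)
      (fun _ b _ hb hab => ⟨hab, hpS b hb⟩) hchain) hne
  rw [List.head?_eq_some_head hne, Option.some_inj] at hhead
  rw [List.getLast?_eq_some_getLast hne, Option.some_inj] at hlast
  rwa [hhead, hlast] at h

end Cactus

theorem stmt_13_general {n : ℕ} (A : Fin n → Fin n → Bool)
    (hcact : IsCactus A) (i j : Fin n) (hedge : A i j = true) :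
    ∀ k : Fin n, (∃ p : List (Fin n), IsPath A i k p ∧ j ∉ p) →
      Set.ncard {T : Finset (Fin n × Fin n) |
        IsTwoForest A j i T ∧ ReachIn T i k} = 1 := by
  rintro k ⟨p, hp, hjp⟩
  have hpj : ∀ x ∈ p, x ∈ univ.erase j := fun x hx =>
    mem_erase.2 ⟨ne_of_mem_of_not_mem hx hjp, mem_univ x⟩
  have hk : ReachIn (entryForest A i j) i k :=
    (reachIn_entryForest i j _ (hp.reachWithin hpj)).resolve_right fun h => by simp at h
  rw [Set.ncard_eq_one]
  refine ⟨entryForest A i j, Set.eq_singleton_iff_unique_mem.2 ⟨?_, ?_⟩⟩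
  · exact ⟨isTwoForest_entryForest hcact i j, hk⟩
  · exact fun T hT => hT.1.eq_entryForest hcact hedge

/-- in a directed cactus with edge `(i,j)`, for each vertex `k`
reachable from `i` without passing through `j`, there is exactly one 2-tree spanning
forest with roots `j` and `i` in which `k` lies in the tree rooted at `i`. -/
theorem stmt_13 {n : ℕ} (A : Fin n → Fin n → Bool) (hA : ∀ i, A i i = false)
    (hcact : IsCactus A) (i j : Fin n) (hedge : A i j = true) :
    ∀ k : Fin n, (∃ p : List (Fin n), IsPath A i k p ∧ j ∉ p) →
      Set.ncard {T : Finset (Fin n × Fin n) |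
        IsTwoForest A j i T ∧ ReachIn T i k} = 1 :=
  stmt_13_general A hcact i j hedge
end

section
/- Let G be a strongly connected balanced digraph with Laplacian L and resistance r_{ij} = l†_{ii} + l†_{jj} − 2 l†_{ij}. If (i,j) is a directed edge of G and either i or j has degree one (in-degree = out-degree = 1), then r_{ij} ≤ 1. -/
open Matrix Finset

/-!
In a strongly connected digraph the maximum principle for `L` shows that `ker L` is spanned by
the all-ones vector; balance makes `Lᵀ` the Laplacian of the reversed digraph, so the same holds
for `ker Lᵀ`, and the Penrose equations give `L†L = LL† = I - J/n`. The columns of `L†` are then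
strictly subharmonic off the diagonal, so `l†_{ki} ≤ l†_{ii}` for all `k`. If the head `j` of the
edge has degree one, with out-neighbour `k`, then column `j` of `L` is `e_j - e_i` and row `j` is
`e_j - e_k`; reading off entries of `L†L` and `LL†` gives `r_{ij} = 1 + l†_{ki} - l†_{ii} ≤ 1`.
Reversing all edges transposes `L` and `L†` and swaps the roles of `i` and `j`.
-/

namespace Matrix

variable {n : ℕ}

/-- `I - J/n`, the orthogonal projection onto the vectors with zero coordinate sum. -/
noncomputable def centering (n : ℕ) : Matrix (Fin n) (Fin n) ℝ :=
  1 - (n : ℝ)⁻¹ • of fun _ _ => 1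

lemma centering_apply (v w : Fin n) :
    centering n v w = (if v = w then 1 else 0) - (n : ℝ)⁻¹ := by
  simp [centering, one_apply]

lemma centering_transpose : (centering n)ᵀ = centering n := by
  ext v w
  simp only [transpose_apply, centering_apply, eq_comm]

end Matrix

section MoorePenrose

variable {n : ℕ} {L M : Matrix (Fin n) (Fin n) ℝ}

lemma IsMoorePenrose.transpose (hM : IsMoorePenrose L M) : IsMoorePenrose Lᵀ Mᵀ := by
  obtain ⟨h₁, h₂, h₃, h₄⟩ := hM
  refine ⟨?_, ?_, ?_, ?_⟩
  · rw [← transpose_mul, ← transpose_mul, ← Matrix.mul_assoc, h₁]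
  · rw [← transpose_mul, ← transpose_mul, ← Matrix.mul_assoc, h₂]
  · rw [← transpose_mul, h₄, h₄]
  · rw [← transpose_mul, h₃, h₃]

lemma IsMoorePenrose.mul_eq_centering (hM : IsMoorePenrose L M)
    (hker : ∀ g, L *ᵥ g = 0 → ∀ v w, g v = g w) (hL1 : L *ᵥ 1 = 0) :
    M * L = centering n := by
  ext v w
  set P := M * L
  -- Each column of `P - 1` lies in `ker L`, so it is constant; its sum is `-1`.
  have hcol_ker : L *ᵥ (fun u => (P - 1) u w) = 0 := by
    have : L * (P - 1) = 0 := by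
      rw [Matrix.mul_sub, ← Matrix.mul_assoc, hM.1, Matrix.mul_one, sub_self]
    ext u
    simpa [mulVec, dotProduct, mul_apply] using congrFun (congrFun this u) w
  have hP_symm : ∀ u, P u w = P w u := fun u => by
    simpa using congrFun (congrFun hM.2.2.2 w) u
  have hP_sum : ∑ u, P u w = 0 := by
    have : P *ᵥ 1 = 0 := by rw [← mulVec_mulVec, hL1, mulVec_zero]
    simpa [hP_symm, mulVec, dotProduct] using congrFun this w
  have hn : (n : ℝ) ≠ 0 := by exact_mod_cast w.pos.ne'
  have hconst : ∑ u, (P - 1) u w = n * (P - 1) v w := by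
    simp [← hker _ hcol_ker v, mul_sub]
  have hsum : ∑ u, (P - 1) u w = -1 := by
    simp [Matrix.sub_apply, Finset.sum_sub_distrib, hP_sum, one_apply]
  have : (P - 1) v w = -(n : ℝ)⁻¹ := by
    field_simp
    linarith
  rw [Matrix.sub_apply, one_apply] at this
  rw [centering_apply]
  linarith

end MoorePenrose

section Laplacian

variable {n : ℕ} {A : Fin n → Fin n → Bool}

lemma outdeg_swap (v : Fin n) : outdeg (Function.swap A) v = indeg A v := rfl

lemma StronglyConnected.swap (hsc : StronglyConnected A) :
    StronglyConnected (Function.swap A) :=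
  fun v w => (hsc w v).swap

lemma lap_swap (hbal : IsBalanced A) : lap (Function.swap A) = (lap A)ᵀ := by
  ext v w
  by_cases hvw : v = w
  · subst hvw
    simp [lap, outdeg_swap, hbal v]
  · simp [lap, hvw, Ne.symm hvw, Function.swap]

lemma lap_apply (hA : ∀ v, A v v = false) (v w : Fin n) :
    lap A v w = (if v = w then (outdeg A v : ℝ) else 0) - (if A v w then 1 else 0) := by
  by_cases hvw : v = w
  · subst hvw
    simp [lap, hA v]
  · split_ifs <;> simp [lap, *]

lemma lap_mulVec_apply (hA : ∀ v, A v v = false) (g : Fin n → ℝ) (v : Fin n) :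
    (lap A *ᵥ g) v = ∑ w ∈ univ.filter (fun w => A v w), (g v - g w) := by
  simp [mulVec, dotProduct, lap_apply hA, sub_mul, Finset.sum_sub_distrib, outdeg, ite_mul,
    Finset.sum_filter]

lemma vecMul_lap_apply (hA : ∀ v, A v v = false) (g : Fin n → ℝ) (w : Fin n) :
    (g ᵥ* lap A) w = g w * outdeg A w - ∑ v ∈ univ.filter (fun v => A v w), g v := by
  simp [vecMul, dotProduct, lap_apply hA, mul_sub, Finset.sum_sub_distrib, mul_ite,
    Finset.sum_filter]

lemma lap_mulVec_one (hA : ∀ v, A v v = false) : lap A *ᵥ 1 = 0 := by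
  ext v
  simp [lap_mulVec_apply hA]

lemma lap_mulVec_nonneg_of_isMax (hA : ∀ v, A v v = false) {g : Fin n → ℝ} {v : Fin n}
    (hv : ∀ w, g w ≤ g v) : 0 ≤ (lap A *ᵥ g) v := by
  rw [lap_mulVec_apply hA]
  exact Finset.sum_nonneg fun w _ => sub_nonneg.2 (hv w)

lemma le_of_lap_mulVec_neg (hA : ∀ v, A v v = false) {g : Fin n → ℝ} {a : Fin n}
    (hg : ∀ v, v ≠ a → (lap A *ᵥ g) v < 0) (v : Fin n) : g v ≤ g a := by
  obtain ⟨v₀, -, hmax⟩ := Finset.exists_max_image univ g ⟨a, Finset.mem_univ a⟩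
  have hv₀ : v₀ = a := by
    by_contra hne
    exact (hg v₀ hne).not_ge (lap_mulVec_nonneg_of_isMax hA fun w => hmax w (mem_univ w))
  exact hv₀ ▸ hmax v (mem_univ v)

lemma StronglyConnected.eq_of_lap_mulVec_eq_zero (hA : ∀ v, A v v = false)
    (hsc : StronglyConnected A) {g : Fin n → ℝ} (hg : lap A *ᵥ g = 0) (v w : Fin n) :
    g v = g w := by
  obtain ⟨v₀, -, hmax⟩ := Finset.exists_max_image univ g ⟨v, Finset.mem_univ v⟩
  -- The maximum of a harmonic function propagates along edges.
  have step : ∀ a b, A a b → g a = g v₀ → g b = g v₀ := by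
    intro a b hab ha
    have hterms := (Finset.sum_eq_zero_iff_of_nonneg fun u _ =>
      sub_nonneg.2 (ha ▸ hmax u (mem_univ u))).1
      ((lap_mulVec_apply hA g a).symm.trans (congrFun hg a))
    linarith [hterms b (by simpa using hab)]
  have hreach : ∀ u, Reach A v₀ u → g u = g v₀ := fun u h => by
    induction h with
    | refl => rfl
    | tail _ hbc ih => exact step _ _ hbc ih
  rw [hreach v (hsc v₀ v), hreach w (hsc v₀ w)]

end Laplacian

section Resistance

variable {n : ℕ} {A : Fin n → Fin n → Bool} {M : Matrix (Fin n) (Fin n) ℝ}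

lemma mul_lap_eq_centering (hA : ∀ v, A v v = false) (hsc : StronglyConnected A)
    (hM : IsMoorePenrose (lap A) M) : M * lap A = centering n :=
  hM.mul_eq_centering (fun _ hg => hsc.eq_of_lap_mulVec_eq_zero hA hg) (lap_mulVec_one hA)

lemma lap_mul_eq_centering (hA : ∀ v, A v v = false) (hsc : StronglyConnected A)
    (hbal : IsBalanced A) (hM : IsMoorePenrose (lap A) M) : lap A * M = centering n := by
  have h := mul_lap_eq_centering (A := Function.swap A) hA hsc.swap
    (lap_swap hbal ▸ hM.transpose)
  rw [lap_swap hbal, ← transpose_mul] at h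
  rw [← transpose_transpose (lap A * M), h, centering_transpose]

lemma le_diag_of_lap_mul_eq_centering (hA : ∀ v, A v v = false)
    (hLM : lap A * M = centering n) (v a : Fin n) : M v a ≤ M a a := by
  refine le_of_lap_mulVec_neg hA (g := fun u => M u a) (fun u hua => ?_) v
  have hn : (0 : ℝ) < (n : ℝ)⁻¹ := by have := a.pos; positivity
  have : (lap A *ᵥ fun u => M u a) u = centering n u a := by
    rw [← hLM]; rfl
  rw [this, centering_apply, if_neg hua]
  linarith

lemma resist_transpose (i j : Fin n) : resist Mᵀ i j = resist M j i := by
  simp only [resist, transpose_apply]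
  ring

lemma resist_le_one_of_degree_one_head (hA : ∀ v, A v v = false) {i j : Fin n}
    (hedge : A i j) (hin : indeg A j = 1) (hout : outdeg A j = 1)
    (hML : M * lap A = centering n) (hLM : lap A * M = centering n) :
    resist M i j ≤ 1 := by
  have hij : i ≠ j := by
    rintro rfl
    simp [hA] at hedge
  obtain ⟨k, hk⟩ := Finset.card_eq_one.1 hout
  obtain ⟨i', hi'⟩ := Finset.card_eq_one.1 hin
  obtain rfl : i = i' := by
    simpa [hi'] using (Finset.ext_iff.1 hi' i).1 (by simpa using hedge)
  -- Column `j` of `L` is `e_j - e_i` and row `j` is `e_j - e_k`.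
  have hcol : ∀ v, M v j - M v i = centering n v j := fun v => by
    rw [← hML]
    have := vecMul_lap_apply hA (M v) j
    simp only [hi', hout, Finset.sum_singleton, Nat.cast_one, mul_one] at this
    exact this.symm
  have hrow : ∀ v, M j v - M k v = centering n j v := fun v => by
    rw [← hLM]
    have := lap_mulVec_apply hA (fun u => M u v) j
    simp only [hk, Finset.sum_singleton] at this
    exact this.symm
  have hmax := le_diag_of_lap_mul_eq_centering hA hLM k i
  have h₁ := hcol i
  have h₂ := hcol j
  have h₃ := hrow i
  simp only [centering_apply, if_neg hij, if_neg hij.symm, ↓reduceIte] at h₁ h₂ h₃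
  unfold resist
  linarith

end Resistance

/-- in a strongly connected balanced digraph, if `(i,j)` is an edge and
`i` or `j` has degree one, then `r_{ij} ≤ 1`. -/
theorem stmt_14 {n : ℕ} (A : Fin n → Fin n → Bool) (hA : ∀ i, A i i = false)
    (hsc : StronglyConnected A) (hbal : IsBalanced A)
    (i j : Fin n) (hedge : A i j = true)
    (hdeg : (indeg A i = 1 ∧ outdeg A i = 1) ∨ (indeg A j = 1 ∧ outdeg A j = 1))
    (M : Matrix (Fin n) (Fin n) ℝ) (hM : IsMoorePenrose (lap A) M) :
    resist M i j ≤ 1 := by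
  have hML := mul_lap_eq_centering hA hsc hM
  have hLM := lap_mul_eq_centering hA hsc hbal hM
  rcases hdeg with ⟨hin, hout⟩ | ⟨hin, hout⟩
  · rw [← resist_transpose]
    refine resist_le_one_of_degree_one_head (A := Function.swap A) hA hedge hout hin ?_ ?_
    · rw [lap_swap hbal, ← transpose_mul, hLM, centering_transpose]
    · rw [lap_swap hbal, ← transpose_mul, hML, centering_transpose]
  · exact resist_le_one_of_degree_one_head hA hedge hin hout hML hLM
end
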